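/- Let R be a commutative ring, m, n ∈ ℕ, and θ : ℕ × ℕ → R a function satisfying: (a) for all i < m there is exactly one j < n with θ(i,j) = 1, and θ(i,j') = 0 for all other j' < n; (b) for all j < n there is exactly one i < m with θ(i,j) = 1, and θ(i',j) = 0 for all other i' < m. Then ∑_{i<m} 1 = ∑_{j<n} 1 in R (i.e. m·1_R = n·1_R). -/

import Mathlib

/-! Double counting: each of the `m` rows and each of the `n` columns of the matrix `θ`
sums to `1`, so summing all entries row by row and column by column gives `m = n` in `R`. -/

open Finset

theorem sum_range_eq_of_exists_single {M : Type*} [AddCommMonoid M] {n : ℕ}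
    {f : ℕ → M} {a : M} (h : ∃ j < n, f j = a ∧ ∀ j' < n, j' ≠ j → f j' = 0) :
    ∑ j ∈ range n, f j = a := by
  obtain ⟨j, hj, hja, hzero⟩ := h
  rw [sum_eq_single_of_mem j (mem_range.mpr hj)
    fun j' hj' hne => hzero j' (mem_range.mp hj') hne, hja]

theorem bijective_php {R : Type*} [CommRing R] (m n : ℕ) (θ : ℕ × ℕ → R)
    (ha : ∀ i < m, ∃ j < n, θ (i, j) = 1 ∧ ∀ j' < n, j' ≠ j → θ (i, j') = 0)
    (hb : ∀ j < n, ∃ i < m, θ (i, j) = 1 ∧ ∀ i' < m, i' ≠ i → θ (i', j) = 0) :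
    ∑ i ∈ Finset.range m, (1 : R) = ∑ j ∈ Finset.range n, (1 : R) :=
  calc ∑ i ∈ range m, (1 : R)
      = ∑ i ∈ range m, ∑ j ∈ range n, θ (i, j) :=
        sum_congr rfl fun i hi =>
          (sum_range_eq_of_exists_single (ha i (mem_range.mp hi))).symm
    _ = ∑ j ∈ range n, ∑ i ∈ range m, θ (i, j) := sum_comm
    _ = ∑ j ∈ range n, (1 : R) :=
        sum_congr rfl fun j hj =>
          sum_range_eq_of_exists_single (hb j (mem_range.mp hj))
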